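/- arXiv:2007.15963 — 4 statements merged into one kernel-verified Lean document; each statement's English description precedes it below -/
import Mathlib

section
/- Let A, Â be L×L real matrices and p̂ ∈ ℝ^L a probability vector. Fix k. Suppose Â · p̂ = A · e_k (where e_k is the k-th standard basis vector) and Â_{kk} ≥ Â_{kj} for all j ≠ k. Then A_{kk} ≤ Â_{kk}. -/
theorem stmt_2 (L : ℕ) (A Ahat : Matrix (Fin L) (Fin L) ℝ) (p : Fin L → ℝ) (k : Fin L)
    (hp_nonneg : ∀ j, 0 ≤ p j) (hp_sum : ∑ j, p j = 1)
    (hmodel : Ahat.mulVec p = A.mulVec (Pi.single k 1))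
    (hdom : ∀ j, j ≠ k → Ahat k j ≤ Ahat k k) :
    A k k ≤ Ahat k k := by
  have h1 : A k k = ∑ j, Ahat k j * p j := by
    have := congrFun hmodel k
    simp [Matrix.mulVec, dotProduct, Pi.single_apply, mul_ite] at this
    linarith [this]
  have h2 : ∑ j, Ahat k j * p j ≤ ∑ j, Ahat k k * p j := by
    apply Finset.sum_le_sum
    intro j _
    by_cases hj : j = k
    · subst hj; rfl
    · exact mul_le_mul_of_nonneg_right (hdom j hj) (hp_nonneg j)
  rw [h1]
  calc ∑ j, Ahat k j * p j ≤ ∑ j, Ahat k k * p j := h2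
    _ = Ahat k k := by rw [← Finset.mul_sum, hp_sum, mul_one]
end

section
/- Let A, Â be L×L column-stochastic matrices (nonnegative entries, columns summing to 1) and p̂ a probability vector. Fix k. Assume: (i) Â·p̂ = A·e_k; (ii) Â_{kk} ≥ Â_{kj} for all j ≠ k; (iii) Â_{ii} ≥ Â_{ji} for all i and j ≠ i; (iv) every entry of A outside the k-th column equals 1/L. Then tr(A) ≤ tr(Â), with equality if Â = A and p̂ = e_k. -/
/-!
Comparing the `k`-th coordinates of `Â p̂ = A e_k` shows that `A_kk` is a convex combination of
the `k`-th row of `Â`, hence at most its largest entry `Â_kk`. Every other diagonal entry of `A`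
is `1/L`, while a column of `Â` sums to `1` and is dominated by its diagonal entry, so that entry
is at least `1/L`. Summing the diagonal gives `tr A ≤ tr Â`.
-/

open Matrix

theorem sum_mul_le_of_le {ι : Type*} [Fintype ι] {v p : ι → ℝ} {c : ℝ}
    (hv : ∀ j, v j ≤ c) (hp_nonneg : ∀ j, 0 ≤ p j) (hp_sum : ∑ j, p j = 1) :
    ∑ j, v j * p j ≤ c :=
  calc ∑ j, v j * p j ≤ ∑ j, c * p j :=
        Finset.sum_le_sum fun j _ => mul_le_mul_of_nonneg_right (hv j) (hp_nonneg j)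
    _ = c := by rw [← Finset.mul_sum, hp_sum, mul_one]

theorem Matrix.inv_card_le_diag_of_col_sum_eq_one {n : Type*} [Fintype n] (M : Matrix n n ℝ)
    (i : n) (hcol : ∑ j, M j i = 1) (hdom : ∀ j, j ≠ i → M j i ≤ M i i) :
    1 / (Fintype.card n : ℝ) ≤ M i i := by
  have hcard : (0 : ℝ) < Fintype.card n := by
    exact_mod_cast Fintype.card_pos_iff.mpr ⟨i⟩
  have hsum : (1 : ℝ) ≤ Fintype.card n * M i i := by
    calc (1 : ℝ) = ∑ j, M j i := hcol.symm
      _ ≤ ∑ _j : n, M i i := Finset.sum_le_sum fun j _ => by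
          rcases eq_or_ne j i with rfl | hj
          exacts [le_rfl, hdom j hj]
      _ = Fintype.card n * M i i := by simp
  rw [div_le_iff₀ hcard]
  linarith

theorem Matrix.diag_le_of_mulVec_eq_col {n : Type*} [Fintype n] [DecidableEq n]
    (A Ahat : Matrix n n ℝ) (p : n → ℝ) (k : n)
    (hp_nonneg : ∀ j, 0 ≤ p j) (hp_sum : ∑ j, p j = 1)
    (hmodel : Ahat *ᵥ p = A *ᵥ Pi.single k 1) (hrow : ∀ j, j ≠ k → Ahat k j ≤ Ahat k k) :
    A k k ≤ Ahat k k := by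
  have hk := congrFun hmodel k
  rw [mulVec_single_one] at hk
  change ∑ j, Ahat k j * p j = A k k at hk
  rw [← hk]
  refine sum_mul_le_of_le (fun j => ?_) hp_nonneg hp_sum
  rcases eq_or_ne j k with rfl | hj
  exacts [le_rfl, hrow j hj]

theorem stmt_5_general (L : ℕ) (A Ahat : Matrix (Fin L) (Fin L) ℝ) (p : Fin L → ℝ) (k : Fin L)
    (hAhat_col : ∀ j, ∑ i, Ahat i j = 1)
    (hp_nonneg : ∀ j, 0 ≤ p j) (hp_sum : ∑ j, p j = 1)
    (hmodel : Ahat.mulVec p = A.mulVec (Pi.single k 1))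
    (hrow : ∀ j, j ≠ k → Ahat k j ≤ Ahat k k)
    (hdiag : ∀ i j, j ≠ i → Ahat j i ≤ Ahat i i)
    (hoff : ∀ i j, j ≠ k → A i j = 1 / L) :
    A.trace ≤ Ahat.trace ∧ (Ahat = A ∧ p = Pi.single k 1 → A.trace = Ahat.trace) := by
  refine ⟨Finset.sum_le_sum fun i _ => ?_, fun ⟨hAhat, _⟩ => by rw [hAhat]⟩
  rcases eq_or_ne i k with rfl | hi
  · exact A.diag_le_of_mulVec_eq_col Ahat p i hp_nonneg hp_sum hmodel hrow
  · have h := Ahat.inv_card_le_diag_of_col_sum_eq_one i (hAhat_col i) (hdiag i)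
    rw [Fintype.card_fin] at h
    simpa only [diag, hoff i i hi] using h

theorem stmt_5 (L : ℕ) (A Ahat : Matrix (Fin L) (Fin L) ℝ) (p : Fin L → ℝ) (k : Fin L)
    (hA_nonneg : ∀ i j, 0 ≤ A i j) (hA_col : ∀ j, ∑ i, A i j = 1)
    (hAhat_nonneg : ∀ i j, 0 ≤ Ahat i j) (hAhat_col : ∀ j, ∑ i, Ahat i j = 1)
    (hp_nonneg : ∀ j, 0 ≤ p j) (hp_sum : ∑ j, p j = 1)
    (hmodel : Ahat.mulVec p = A.mulVec (Pi.single k 1))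
    (hrow : ∀ j, j ≠ k → Ahat k j ≤ Ahat k k)
    (hdiag : ∀ i j, j ≠ i → Ahat j i ≤ Ahat i i)
    (hoff : ∀ i j, j ≠ k → A i j = 1 / L) :
    A.trace ≤ Ahat.trace ∧ (Ahat = A ∧ p = Pi.single k 1 → A.trace = Ahat.trace) :=
  stmt_5_general L A Ahat p k hAhat_col hp_nonneg hp_sum hmodel hrow hdiag hoff
end

section
/- Let A, Â be L×L column-stochastic matrices and p̂ a probability vector. Fix k. Assume: (i) Â·p̂ = A·e_k; (ii) Â_{kk} > Â_{kj} for all j ≠ k (strict); (iii) Â_{ii} ≥ Â_{ji} for all i and j ≠ i; (iv) every entry of A outside the k-th column equals 1/L; (v) tr(Â) = tr(A). Then p̂ = e_k and the k-th column of Â equals the k-th column of A (i.e., Â_{ik} = A_{ik} for all i). -/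
theorem stmt_6 (L : ℕ) (A Ahat : Matrix (Fin L) (Fin L) ℝ) (p : Fin L → ℝ) (k : Fin L)
    (hA_nonneg : ∀ i j, 0 ≤ A i j) (hA_col : ∀ j, ∑ i, A i j = 1)
    (hAhat_nonneg : ∀ i j, 0 ≤ Ahat i j) (hAhat_col : ∀ j, ∑ i, Ahat i j = 1)
    (hp_nonneg : ∀ j, 0 ≤ p j) (hp_sum : ∑ j, p j = 1)
    (hmodel : Ahat.mulVec p = A.mulVec (Pi.single k 1))
    (hrow : ∀ j, j ≠ k → Ahat k j < Ahat k k)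
    (hdiag : ∀ i j, j ≠ i → Ahat j i ≤ Ahat i i)
    (hoff : ∀ i j, j ≠ k → A i j = 1 / L)
    (htr : Ahat.trace = A.trace) :
    p = Pi.single k 1 ∧ ∀ i, Ahat i k = A i k := by
  have hL : 0 < L := k.pos
  have hLr : (0:ℝ) < L := by exact_mod_cast hL
  have hmk : ∑ j, Ahat k j * p j = A k k := by
    have h := congrFun hmodel k
    simpa [Matrix.mulVec, dotProduct, Pi.single_apply, mul_ite,
      Finset.sum_ite_eq'] using h
  have hkk : A k k ≤ Ahat k k := by
    calc A k k = ∑ j, Ahat k j * p j := hmk.symm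
      _ ≤ ∑ j, Ahat k k * p j := by
          apply Finset.sum_le_sum
          intro j _
          by_cases hj : j = k
          · subst hj; exact le_refl _
          · exact mul_le_mul_of_nonneg_right (le_of_lt (hrow j hj)) (hp_nonneg j)
      _ = Ahat k k := by rw [← Finset.mul_sum, hp_sum, mul_one]
  have hdiagL : ∀ i : Fin L, (1:ℝ)/L ≤ Ahat i i := by
    intro i
    have h2 : ∑ j, Ahat j i ≤ ∑ _j : Fin L, Ahat i i := by
      apply Finset.sum_le_sum; intro j _
      by_cases hj : j = i
      · subst hj; exact le_refl _
      · exact hdiag i j hj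
    rw [hAhat_col i] at h2
    have h3 : (1:ℝ) ≤ L * Ahat i i := by
      simpa [Finset.sum_const, Finset.card_univ, nsmul_eq_mul] using h2
    rw [div_le_iff₀ hLr]
    linarith
  have h1 := Finset.add_sum_erase Finset.univ (fun i => Ahat i i) (Finset.mem_univ k)
  have h2 := Finset.add_sum_erase Finset.univ (fun i => A i i) (Finset.mem_univ k)
  have ht : ∑ i, Ahat i i = ∑ i, A i i := by
    simpa [Matrix.trace, Matrix.diag] using htr
  have hsum_erase : ∑ i ∈ Finset.univ.erase k, A i i
      ≤ ∑ i ∈ Finset.univ.erase k, Ahat i i := by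
    apply Finset.sum_le_sum
    intro i hi
    have hik : i ≠ k := Finset.ne_of_mem_erase hi
    rw [hoff i i hik]
    exact hdiagL i
  have hkeq : Ahat k k = A k k := by
    linarith
  have hzero : ∀ j, j ≠ k → p j = 0 := by
    intro j hj
    by_contra hpj
    have hpj' : 0 < p j := lt_of_le_of_ne (hp_nonneg j) (Ne.symm hpj)
    have hlt : ∑ j', Ahat k j' * p j' < ∑ j', Ahat k k * p j' := by
      apply Finset.sum_lt_sum
      · intro i _
        by_cases hi : i = k
        · subst hi; exact le_refl _
        · exact mul_le_mul_of_nonneg_right (le_of_lt (hrow i hi)) (hp_nonneg i)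
      · exact ⟨j, Finset.mem_univ j, mul_lt_mul_of_pos_right (hrow j hj) hpj'⟩
    rw [hmk, ← Finset.mul_sum, hp_sum, mul_one, ← hkeq] at hlt
    exact lt_irrefl _ hlt
  have hpk : p k = 1 := by
    have hs : ∑ j, p j = p k :=
      Finset.sum_eq_single k (fun j _ hj => hzero j hj)
        (fun h => absurd (Finset.mem_univ k) h)
    rw [hs] at hp_sum
    exact hp_sum
  have hp : p = Pi.single k 1 := by
    funext j
    by_cases hj : j = k
    · subst hj; simpa using hpk
    · simp [Pi.single_apply, hj, hzero j hj]
  refine ⟨hp, fun i => ?_⟩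
  have h := congrFun hmodel i
  rw [hp] at h
  simpa [Matrix.mulVec, dotProduct, Pi.single_apply, mul_ite,
    Finset.sum_ite_eq'] using h
end

section
/- Let A^(1),…,A^(R), Â^(1),…,Â^(R) be L×L column-stochastic matrices, π ∈ ℝ^R a probability vector, A* = ∑_r π_r A^(r), Â* = ∑_r π_r Â^(r), and p̂ a probability vector. Fix k. Assume: (i) Â^(r)·p̂ = A^(r)·e_k for every r; (ii) Â*_{kk} > Â*_{kj} for all j ≠ k; (iii) Â*_{ii} ≥ Â*_{ji} for all i, j ≠ i; (iv) every entry of A* outside the k-th column equals 1/L; (v) tr(Â*) = tr(A*). Then p̂ = e_k, and for every annotator r the k-th column of Â^(r) equals the k-th column of A^(r). -/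
/-!
Column stochasticity and diagonal dominance force every diagonal entry of `Â*` to be at least
`1/L`, while outside the `k`-th column `A*` has exactly `1/L` on its diagonal; equal traces then give
`Â*_kk ≤ A*_kk = (Â* p̂)_k`. Row `k` of `Â*` is strictly maximised at `k`, so on the simplex
`(Â* p̂)_k ≥ Â*_kk` holds only at `p̂ = e_k`, and then (i) reads `Â^(r) e_k = A^(r) e_k`.
-/

open Finset Matrix

section Stochastic

variable {ι n : Type*} [Fintype ι] [Fintype n]

theorem Matrix.colSum_weightedSum_eq_one {R m : Type*} [Semiring R]
    (π : ι → R) (hπ : ∑ r, π r = 1) (M : ι → Matrix n m R) (hM : ∀ r j, ∑ i, M r i j = 1)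
    (j : m) : ∑ i, (∑ r, π r • M r) i j = 1 := by
  simp only [Matrix.sum_apply, Matrix.smul_apply, smul_eq_mul]
  rw [Finset.sum_comm]
  simp only [← mul_sum, hM, mul_one, hπ]

theorem Matrix.one_div_card_le_diag_of_col_dominant {R : Type*} [Field R] [LinearOrder R]
    [IsStrictOrderedRing R] (M : Matrix n n R) (i : n) (hcol : ∑ j, M j i = 1)
    (hdom : ∀ j, j ≠ i → M j i ≤ M i i) : 1 / (Fintype.card n : R) ≤ M i i := by
  have hcard : (0 : R) < Fintype.card n := by exact_mod_cast Fintype.card_pos_iff.2 ⟨i⟩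
  rw [div_le_iff₀ hcard, ← hcol, mul_comm, ← nsmul_eq_mul, ← Finset.card_univ]
  refine Finset.sum_le_card_nsmul _ _ _ fun j _ => ?_
  rcases eq_or_ne j i with rfl | hj
  exacts [le_rfl, hdom j hj]

theorem Matrix.trace_eq_add_sum_erase [DecidableEq n] {R : Type*} [AddCommMonoid R]
    (M : Matrix n n R) (k : n) : M.trace = M k k + ∑ i ∈ univ.erase k, M i i :=
  (add_sum_erase _ _ (mem_univ k)).symm

theorem Matrix.diag_le_of_trace_eq [DecidableEq n] {R : Type*} [AddCommMonoid R] [PartialOrder R]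
    [IsOrderedCancelAddMonoid R] {M N : Matrix n n R} (htr : M.trace = N.trace) (k : n)
    (hle : ∀ i, i ≠ k → N i i ≤ M i i) : M k k ≤ N k k := by
  rw [M.trace_eq_add_sum_erase k, N.trace_eq_add_sum_erase k] at htr
  have hrest : ∑ i ∈ univ.erase k, N i i ≤ ∑ i ∈ univ.erase k, M i i :=
    sum_le_sum fun i hi => hle i (ne_of_mem_erase hi)
  exact le_of_add_le_add_right (htr.trans_le (add_le_add le_rfl hrest))

end Stochastic

theorem eq_single_of_le_dotProduct {n R : Type*} [Fintype n] [DecidableEq n] [CommRing R]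
    [LinearOrder R] [IsStrictOrderedRing R] {p v : n → R} (hp : p ∈ stdSimplex R n) {k : n}
    (hv : ∀ j, j ≠ k → v j < v k) (hle : v k ≤ v ⬝ᵥ p) : p = Pi.single k 1 := by
  have hgap_nonneg : ∀ j ∈ univ, 0 ≤ (v k - v j) * p j := fun j _ => by
    rcases eq_or_ne j k with rfl | hj
    · simp
    · exact mul_nonneg (sub_nonneg.2 (hv j hj).le) (hp.1 j)
  have hgap : ∑ j, (v k - v j) * p j = v k - v ⬝ᵥ p := by
    simp only [sub_mul, sum_sub_distrib, ← mul_sum, hp.2, mul_one, dotProduct]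
  have hzero : ∀ j, j ≠ k → p j = 0 := fun j hj => by
    have := (sum_eq_zero_iff_of_nonneg hgap_nonneg).1
      (le_antisymm (by linarith) (sum_nonneg hgap_nonneg)) j (mem_univ j)
    exact (mul_eq_zero.1 this).resolve_left (sub_pos.2 (hv j hj)).ne'
  funext j
  rcases eq_or_ne j k with rfl | hj
  · rw [← hp.2, sum_eq_single j fun i _ hi => hzero i hi] <;> simp
  · simp [hj, hzero j hj]

theorem stmt_8_general (L R : ℕ) (A Ahat : Fin R → Matrix (Fin L) (Fin L) ℝ) (π : Fin R → ℝ)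
    (p : Fin L → ℝ) (k : Fin L)
    (hAhat_col : ∀ r j, ∑ i, Ahat r i j = 1)
    (hπ_sum : ∑ r, π r = 1)
    (hp_nonneg : ∀ j, 0 ≤ p j) (hp_sum : ∑ j, p j = 1)
    (hmodel : ∀ r, (Ahat r).mulVec p = (A r).mulVec (Pi.single k 1))
    (hrow : ∀ j, j ≠ k → (∑ r, π r • Ahat r) k j < (∑ r, π r • Ahat r) k k)
    (hdiag : ∀ i j, j ≠ i → (∑ r, π r • Ahat r) j i ≤ (∑ r, π r • Ahat r) i i)
    (hoff : ∀ i j, j ≠ k → (∑ r, π r • A r) i j = 1 / L)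
    (htr : (∑ r, π r • Ahat r).trace = (∑ r, π r • A r).trace) :
    p = Pi.single k 1 ∧ ∀ r i, Ahat r i k = A r i k := by
  set Bh := ∑ r, π r • Ahat r
  set B := ∑ r, π r • A r
  have hmean : Bh *ᵥ p = B *ᵥ Pi.single k 1 := by
    simp only [Bh, B, sum_mulVec, smul_mulVec, hmodel]
  have hdiag_ge : ∀ i, i ≠ k → B i i ≤ Bh i i := fun i hi => by
    rw [hoff i i hi]
    simpa using Bh.one_div_card_le_diag_of_col_dominant i
      (colSum_weightedSum_eq_one π hπ_sum Ahat hAhat_col i) (hdiag i)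
  have hkk : Bh k k ≤ Bh k ⬝ᵥ p := by
    have hBkk : B k k = (Bh *ᵥ p) k := by simpa using (congrFun hmean k).symm
    exact (diag_le_of_trace_eq htr k hdiag_ge).trans_eq hBkk
  have hp : p = Pi.single k 1 := eq_single_of_le_dotProduct ⟨hp_nonneg, hp_sum⟩ hrow hkk
  refine ⟨hp, fun r i => ?_⟩
  simpa [hp] using congrFun (hmodel r) i

theorem stmt_8 (L R : ℕ) (A Ahat : Fin R → Matrix (Fin L) (Fin L) ℝ) (π : Fin R → ℝ)
    (p : Fin L → ℝ) (k : Fin L)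
    (hA_nonneg : ∀ r i j, 0 ≤ A r i j) (hA_col : ∀ r j, ∑ i, A r i j = 1)
    (hAhat_nonneg : ∀ r i j, 0 ≤ Ahat r i j) (hAhat_col : ∀ r j, ∑ i, Ahat r i j = 1)
    (hπ_nonneg : ∀ r, 0 ≤ π r) (hπ_sum : ∑ r, π r = 1)
    (hp_nonneg : ∀ j, 0 ≤ p j) (hp_sum : ∑ j, p j = 1)
    (hmodel : ∀ r, (Ahat r).mulVec p = (A r).mulVec (Pi.single k 1))
    (hrow : ∀ j, j ≠ k → (∑ r, π r • Ahat r) k j < (∑ r, π r • Ahat r) k k)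
    (hdiag : ∀ i j, j ≠ i → (∑ r, π r • Ahat r) j i ≤ (∑ r, π r • Ahat r) i i)
    (hoff : ∀ i j, j ≠ k → (∑ r, π r • A r) i j = 1 / L)
    (htr : (∑ r, π r • Ahat r).trace = (∑ r, π r • A r).trace) :
    p = Pi.single k 1 ∧ ∀ r i, Ahat r i k = A r i k :=
  stmt_8_general L R A Ahat π p k hAhat_col hπ_sum hp_nonneg hp_sum hmodel hrow hdiag hoff htr
end
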